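/- arXiv:1111.0405 — 4 statements merged into one kernel-verified Lean document; each statement's English description precedes it below -/
import Mathlib

section
/- Let 𝒯 be a 2-smooth canonical tester with query probability τ for a linear code C ⊆ GF(2)^N, and let γ ∈ [0,1]. Then for every vector α ∈ GF(2)^N with Δ(α,C)·τ ≤ γ, the rejection probability satisfies s_𝒯(α) ≥ (1−γ)·Δ(α,C)·τ. -/
open Finset
open scoped Classical

/-- Words of length `N` over `GF(2)`. -/
abbrev Word (N : ℕ) := Fin N → ZMod 2

/-- The dual of a set of words: all words orthogonal (over `GF(2)`) to every element. -/
def dualSet {N : ℕ} (C : Set (Word N)) : Set (Word N) :=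
  {x | ∀ c ∈ C, ∑ i, c i * x i = 0}

/-- Hamming distance from a word to a code. -/
noncomputable def distCode {N : ℕ} (C : Set (Word N)) (α : Word N) : ℕ :=
  sInf {d | ∃ c ∈ C, hammingDist α c = d}

/-! Pick a nearest codeword `c` and let `S` be the support of `α - c`, so `#S = Δ(α, C) = d`.
For `q ∈ C^⊥`, `⟨α, q⟩ = ⟨α - c, q⟩` is the parity of `m = #(S ∩ supp q)`, and the Bonferroni
inequality `[m odd] ≥ 2m - m²` bounds `s(α)` below by `2 E[m] - E[m²]`. Two-smoothness gives
`E[m] = dτ` and `E[m²] = dτ + d(d - 1)τ²`, hence `s(α) ≥ dτ - (dτ)² ≥ (1 - γ) dτ`. -/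

lemma two_mul_sub_sq_le_ite_odd (m : ℕ) :
    2 * (m : ℝ) - (m : ℝ) ^ 2 ≤ if Odd m then 1 else 0 := by
  rcases m with _ | _ | m
  · simp
  · norm_num
  · split_ifs <;> push_cast <;> nlinarith

lemma sum_sum_ite_eq_const {ι : Type*} [DecidableEq ι] (S : Finset ι) (a b : ℝ) :
    ∑ i ∈ S, ∑ j ∈ S, (if i = j then a else b) = #S * a + ((#S : ℝ) ^ 2 - #S) * b := by
  have hsplit : ∀ i j : ι, (if i = j then a else b) = b + if i = j then a - b else 0 := by
    intro i j; split_ifs <;> ring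
  simp only [hsplit, sum_add_distrib, sum_const, sum_ite_eq, nsmul_eq_mul]
  simp only [sum_ite_mem, inter_self, sum_const, nsmul_eq_mul]
  ring

section Moments

variable {Ω ι : Type*} [Fintype Ω] (w : Ω → ℝ)

lemma sum_mul_card_filter (P : Ω → ι → Prop) [∀ q i, Decidable (P q i)] (S : Finset ι) :
    ∑ q, w q * (#(S.filter (P q)) : ℝ) = ∑ i ∈ S, ∑ q ∈ univ.filter (P · i), w q := by
  simp only [card_filter, Nat.cast_sum, Nat.cast_ite, Nat.cast_one, Nat.cast_zero, mul_sum,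
    mul_ite, mul_one, mul_zero]
  rw [sum_comm]
  simp only [sum_filter]

lemma sum_mul_card_filter_sq (P : Ω → ι → Prop) [∀ q i, Decidable (P q i)] (S : Finset ι) :
    ∑ q, w q * (#(S.filter (P q)) : ℝ) ^ 2
      = ∑ i ∈ S, ∑ j ∈ S, ∑ q ∈ univ.filter (fun q => P q i ∧ P q j), w q := by
  have hsq : ∀ q, (#(S.filter (P q)) : ℝ) ^ 2
      = ∑ i ∈ S, ∑ j ∈ S, if P q i ∧ P q j then 1 else 0 := by
    intro q
    simp only [card_filter, Nat.cast_sum, sq, sum_mul_sum, Nat.cast_ite, Nat.cast_one,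
      Nat.cast_zero, ite_zero_mul_ite_zero, mul_one]
  simp only [hsq, mul_sum, mul_boole]
  rw [sum_comm]
  refine sum_congr rfl fun i _ => ?_
  rw [sum_comm]
  simp only [sum_filter]

lemma two_mul_sum_sub_sum_sq_le_sum_filter (hw : ∀ q, 0 ≤ w q) (m : Ω → ℕ) (E : Ω → Prop)
    [DecidablePred E] (hE : ∀ q, w q ≠ 0 → (E q ↔ Odd (m q))) :
    2 * ∑ q, w q * (m q : ℝ) - ∑ q, w q * (m q : ℝ) ^ 2 ≤ ∑ q ∈ univ.filter E, w q := by
  rw [sum_filter, mul_sum, ← sum_sub_distrib]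
  refine sum_le_sum fun q _ => ?_
  by_cases hq : w q = 0
  · simp [hq]
  calc 2 * (w q * m q) - w q * (m q : ℝ) ^ 2 = w q * (2 * m q - (m q : ℝ) ^ 2) := by ring
    _ ≤ w q * if Odd (m q) then 1 else 0 := by
      gcongr
      · exact hw q
      · exact two_mul_sub_sq_le_ite_odd (m q)
    _ = if E q then w q else 0 := by simp [hE q hq]

end Moments

section Words

variable {ι : Type*} [Fintype ι]

lemma sum_mul_eq_card_filter (x y : ι → ZMod 2) :
    ∑ i, x i * y i = (#((univ.filter (x · = 1)).filter (y · = 1)) : ZMod 2) := by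
  have hmul : ∀ a b : ZMod 2, a * b = if a = 1 ∧ b = 1 then 1 else 0 := by decide
  simp only [hmul, filter_filter, ← sum_boole]

lemma card_filter_sub_eq_one (x y : ι → ZMod 2) :
    #(univ.filter fun i => (x - y) i = 1) = hammingDist x y := by
  have hsub : ∀ a b : ZMod 2, a - b = 1 ↔ a ≠ b := by decide
  simp only [Pi.sub_apply, hsub, hammingDist]

end Words

section Codes

variable {N : ℕ}

lemma exists_hammingDist_eq_distCode (C : Submodule (ZMod 2) (Word N)) (x : Word N) :
    ∃ c ∈ C, hammingDist x c = distCode (C : Set (Word N)) x :=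
  Nat.sInf_mem (s := {d | ∃ c ∈ (C : Set (Word N)), hammingDist x c = d})
    ⟨hammingDist x 0, 0, C.zero_mem, rfl⟩

lemma sum_mul_eq_one_iff_odd {C : Set (Word N)} {x c q : Word N} (hc : c ∈ C)
    (hq : q ∈ dualSet C) :
    ∑ i, x i * q i = 1 ↔ Odd #((univ.filter ((x - c) · = 1)).filter (q · = 1)) := by
  have hshift : ∑ i, x i * q i = ∑ i, (x - c) i * q i := by
    simp only [Pi.sub_apply, sub_mul, sum_sub_distrib, hq c hc, sub_zero]
  rw [hshift, sum_mul_eq_card_filter, ZMod.natCast_eq_one_iff_odd]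

end Codes

theorem stmt4_general {N : ℕ} (C : Submodule (ZMod 2) (Word N))
    (w : Word N → ℝ) (hw0 : ∀ q, 0 ≤ w q)
    (hsupp : ∀ q, w q ≠ 0 → q ∈ dualSet (C : Set (Word N)))
    (τ : ℝ)
    (hsmooth : ∀ i : Fin N,
      ∑ q ∈ univ.filter (fun q : Word N => q i = 1), w q = τ)
    (h2smooth : ∀ i j : Fin N, i ≠ j →
      ∑ q ∈ univ.filter (fun q : Word N => q i = 1 ∧ q j = 1), w q = τ ^ 2)
    (γ : ℝ)
    (α : Word N) (hα : (distCode (C : Set (Word N)) α : ℝ) * τ ≤ γ) :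
    (1 - γ) * ((distCode (C : Set (Word N)) α : ℝ) * τ)
      ≤ ∑ q ∈ univ.filter (fun q : Word N => ∑ i, α i * q i = 1), w q := by
  obtain ⟨c, hc, hdist⟩ := exists_hammingDist_eq_distCode C α
  set d := distCode (C : Set (Word N)) α
  set S := univ.filter fun i => (α - c) i = 1
  have hS : #S = d := by rw [card_filter_sub_eq_one, hdist]
  have hfirst : ∑ q, w q * (#(S.filter (q · = 1)) : ℝ) = d * τ := by
    simp [sum_mul_card_filter, hsmooth, hS]
  have hsecond : ∑ q, w q * (#(S.filter (q · = 1)) : ℝ) ^ 2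
      = d * τ + ((d : ℝ) ^ 2 - d) * τ ^ 2 := by
    rw [sum_mul_card_filter_sq, ← hS, ← sum_sum_ite_eq_const]
    refine sum_congr rfl fun i _ => sum_congr rfl fun j _ => ?_
    split_ifs with hij
    · simp [hij, hsmooth]
    · exact h2smooth i j hij
  have hbonferroni := two_mul_sum_sub_sum_sq_le_sum_filter w hw0 _ _
    fun q hq => sum_mul_eq_one_iff_odd (x := α) hc (hsupp q hq)
  have hdτ : 0 ≤ (d : ℝ) * τ :=
    hfirst ▸ sum_nonneg fun q _ => mul_nonneg (hw0 q) (Nat.cast_nonneg _)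
  rw [hfirst, hsecond] at hbonferroni
  nlinarith [mul_le_mul_of_nonneg_left hα hdτ, mul_nonneg (Nat.cast_nonneg d) (sq_nonneg τ)]

/-- For a `2`-smooth canonical tester `w` with query probability `τ` and any `γ ∈ [0,1]`,
every word `α` with `Δ(α,C)·τ ≤ γ` has rejection probability at least
`(1 − γ)·Δ(α,C)·τ`. -/
theorem stmt4 {N : ℕ} (C : Submodule (ZMod 2) (Word N))
    (w : Word N → ℝ) (hw0 : ∀ q, 0 ≤ w q) (hw1 : ∑ q, w q = 1)
    (hsupp : ∀ q, w q ≠ 0 → q ∈ dualSet (C : Set (Word N)))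
    (τ : ℝ)
    (hτ : τ = (∑ q, w q * (hammingNorm q : ℝ)) / (N : ℝ))
    (hsmooth : ∀ i : Fin N,
      ∑ q ∈ univ.filter (fun q : Word N => q i = 1), w q = τ)
    (h2smooth : ∀ i j : Fin N, i ≠ j →
      ∑ q ∈ univ.filter (fun q : Word N => q i = 1 ∧ q j = 1), w q = τ ^ 2)
    (γ : ℝ) (hγ0 : 0 ≤ γ) (hγ1 : γ ≤ 1)
    (α : Word N) (hα : (distCode (C : Set (Word N)) α : ℝ) * τ ≤ γ) :
    (1 - γ) * ((distCode (C : Set (Word N)) α : ℝ) * τ)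
      ≤ ∑ q ∈ univ.filter (fun q : Word N => ∑ i, α i * q i = 1), w q :=
  stmt4_general C w hw0 hsupp τ hsmooth h2smooth γ α hα
end

section
/- Let C ⊆ GF(2)^N be a linear code with minimum distance D, and let ℓ < (D−1)/4. Let 𝒱 be the subspace of functions C^⊥ → ℝ spanned by characters χ_α with Δ(α,C) ≤ ℓ. Then ‖𝒱‖_{2→4} ≤ 3^{ℓ/2}; that is, for every f in 𝒱, E_{p∈C^⊥}[f(p)⁴] ≤ 9^ℓ · (E_{p∈C^⊥}[f(p)²])². -/
/-!
The uniform distribution on `C^⊥` is `(D - 1)`-wise independent: if `wt α < D` then `χ_α`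
averages over `C^⊥` to `[α = 0]`, exactly as over all of `GF(2)^N`, because a word `α ∉ C` is
non-orthogonal to some `p₀ ∈ C^⊥`. On `C^⊥` we have `χ_α = χ_{α + c}` for `c ∈ C`, so `f` agrees
there with a polynomial `F` of degree `≤ ℓ`; then `F²` and `F⁴` have degree `≤ 4ℓ < D`, and the
moments of `f` over `C^⊥` are those of `F` over the whole cube. There the Bonami inequality is
proved by induction on `N`: writing `F (x, p) = G p + (-1)^x H p` with `deg H < ℓ`, one has
`E F⁴ = E G⁴ + 6 E G²H² + E H⁴`, and Cauchy–Schwarz bounds the middle term.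
-/

open Finset
open scoped Classical

/-- The character `χ_α(p) = (−1)^{⟨α,p⟩}`. -/
noncomputable def chr {N : ℕ} (α p : Word N) : ℝ :=
  (-1 : ℝ) ^ (∑ i, α i * p i).val

/-- The finite set of codewords of the dual code. -/
noncomputable def dualFinset {N : ℕ} (C : Set (Word N)) : Finset (Word N) :=
  univ.filter (· ∈ dualSet C)

open scoped BigOperators

section Development

variable {N : ℕ} {C : Submodule (ZMod 2) (Word N)}

lemma ZMod.eq_zero_or_eq_one_of_two (a : ZMod 2) : a = 0 ∨ a = 1 := by
  revert a; decide

lemma neg_one_pow_val_add (a b : ZMod 2) :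
    (-1 : ℝ) ^ (a + b).val = (-1) ^ a.val * (-1) ^ b.val := by
  rw [ZMod.val_add, ← neg_one_pow_eq_pow_mod_two, pow_add]

lemma chr_add_left (α β p : Word N) : chr (α + β) p = chr α p * chr β p := by
  simp only [chr, Pi.add_apply, add_mul, sum_add_distrib, neg_one_pow_val_add]

lemma chr_comm (α p : Word N) : chr α p = chr p α := by
  simp only [chr, mul_comm]

lemma chr_add_right (α p q : Word N) : chr α (p + q) = chr α p * chr α q := by
  rw [chr_comm, chr_add_left, chr_comm p, chr_comm q]

lemma chr_zero_left : chr (0 : Word N) = 1 := by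
  funext p; simp [chr]

lemma chr_of_sum_eq_zero {α p : Word N} (h : ∑ i, α i * p i = 0) : chr α p = 1 := by
  simp [chr, h]

lemma chr_of_sum_ne_zero {α p : Word N} (h : ∑ i, α i * p i ≠ 0) : chr α p = -1 := by
  simp [chr, (ZMod.eq_zero_or_eq_one_of_two _).resolve_left h, ZMod.val_one]

lemma chr_cons (a x : ZMod 2) (β p : Word N) :
    chr (Fin.cons a β : Word (N + 1)) (Fin.cons x p) = (-1) ^ (a * x).val * chr β p := by
  simp only [chr, Fin.sum_univ_succ, Fin.cons_zero, Fin.cons_succ, neg_one_pow_val_add]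

lemma hammingNorm_add_le {ι : Type*} [Fintype ι] {β : ι → Type*} [∀ i, AddZeroClass (β i)]
    [∀ i, DecidableEq (β i)] (x y : ∀ i, β i) :
    hammingNorm (x + y) ≤ hammingNorm x + hammingNorm y := by
  refine (card_le_card fun i hi => ?_).trans (card_union_le _ _)
  by_contra h
  simp_all

lemma hammingNorm_cons (a : ZMod 2) (β : Word N) :
    hammingNorm (Fin.cons a β : Word (N + 1)) = (if a = 0 then 0 else 1) + hammingNorm β := by
  simp only [hammingNorm, card_filter, Fin.sum_univ_succ, Fin.cons_zero, Fin.cons_succ]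
  split_ifs <;> simp_all

lemma mem_dualFinset {S : Set (Word N)} {p : Word N} : p ∈ dualFinset S ↔ p ∈ dualSet S := by
  simp [dualFinset]

lemma zero_mem_dualFinset (S : Set (Word N)) : 0 ∈ dualFinset S :=
  mem_dualFinset.2 fun c _ => by simp

lemma add_mem_dualSet_iff {S : Set (Word N)} {p q : Word N} (hq : q ∈ dualSet S) :
    p + q ∈ dualSet S ↔ p ∈ dualSet S := by
  simp only [dualSet, Set.mem_ofPred_eq, Pi.add_apply, mul_add, sum_add_distrib]
  exact forall₂_congr fun c hc => by rw [hq c hc, add_zero]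

lemma dualFinset_bot : dualFinset ((⊥ : Submodule (ZMod 2) (Word N)) : Set (Word N)) = univ :=
  eq_univ_of_forall fun p => mem_dualFinset.2 fun c hc => by
    simp [(Submodule.mem_bot _).1 hc]

lemma exists_mem_dualSet_sum_ne_zero {α : Word N} (hα : α ∉ C) :
    ∃ p ∈ dualSet (C : Set (Word N)), ∑ i, α i * p i ≠ 0 := by
  obtain ⟨φ, hφα, hCφ⟩ := Submodule.exists_le_ker_of_notMem hα
  set p : Word N := fun i => φ fun j => if i = j then 1 else 0
  have hφ (x : Word N) : φ x = ∑ i, x i * p i := by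
    simpa only [smul_eq_mul] using LinearMap.pi_apply_eq_sum_univ φ x
  exact ⟨p, fun c hc => (hφ c).symm.trans (hCφ hc), (hφ α) ▸ hφα⟩

lemma expect_chr_dualFinset {D : ℕ} (hD : ∀ c ∈ C, c ≠ 0 → D ≤ hammingNorm c) {α : Word N}
    (hα : hammingNorm α < D) :
    𝔼 p ∈ dualFinset (C : Set (Word N)), chr α p = if α = 0 then 1 else 0 := by
  split_ifs with h0
  · simp [h0, chr_zero_left, expect_const ⟨0, zero_mem_dualFinset _⟩]
  obtain ⟨p₀, hp₀, hne⟩ := exists_mem_dualSet_sum_ne_zero fun h => (hD α h h0).not_gt hα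
  -- translating by `p₀` permutes `C^⊥` but flips the sign of `χ_α`
  have hflip : 𝔼 p ∈ dualFinset (C : Set (Word N)), chr α p
      = -𝔼 p ∈ dualFinset (C : Set (Word N)), chr α p := by
    calc _ = 𝔼 p ∈ dualFinset (C : Set (Word N)), chr α (p + p₀) :=
          (expect_equiv (Equiv.addRight p₀)
            (fun p => by simp [mem_dualFinset, add_mem_dualSet_iff hp₀]) fun _ _ => rfl).symm
      _ = _ := by simp only [chr_add_right, chr_of_sum_ne_zero hne, mul_neg_one, expect_neg_distrib]
  linarith

lemma expect_chr (α : Word N) : 𝔼 p, chr α p = if α = 0 then 1 else 0 := by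
  have h := expect_chr_dualFinset (C := ⊥) (D := hammingNorm α + 1)
    (fun c hc h0 => absurd ((Submodule.mem_bot _).1 hc) h0) (Nat.lt_succ_self _)
  rwa [dualFinset_bot] at h

/-- Multilinear polynomials of degree at most `ℓ`, in the character basis. -/
def lowDegree (N ℓ : ℕ) : Submodule ℝ (Word N → ℝ) :=
  Submodule.span ℝ (chr '' {α | hammingNorm α ≤ ℓ})

lemma chr_mem_lowDegree {ℓ : ℕ} {α : Word N} (hα : hammingNorm α ≤ ℓ) :
    chr α ∈ lowDegree N ℓ :=
  Submodule.subset_span ⟨α, hα, rfl⟩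

lemma mul_mem_lowDegree {ℓ m : ℕ} {F G : Word N → ℝ} (hF : F ∈ lowDegree N ℓ)
    (hG : G ∈ lowDegree N m) : F * G ∈ lowDegree N (ℓ + m) := by
  refine (?_ : lowDegree N ℓ * lowDegree N m ≤ lowDegree N (ℓ + m)) (Submodule.mul_mem_mul hF hG)
  rw [lowDegree, lowDegree, Submodule.span_mul_span]
  refine Submodule.span_le.2 ?_
  rintro _ ⟨_, ⟨α, hα, rfl⟩, _, ⟨β, hβ, rfl⟩, rfl⟩
  change chr α * chr β ∈ lowDegree N (ℓ + m)
  rw [show chr α * chr β = chr (α + β) from funext fun p => (chr_add_left α β p).symm]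
  exact chr_mem_lowDegree ((hammingNorm_add_le α β).trans (add_le_add hα hβ))

lemma pow_mem_lowDegree {ℓ : ℕ} {F : Word N → ℝ} (hF : F ∈ lowDegree N ℓ) (k : ℕ) :
    F ^ k ∈ lowDegree N (k * ℓ) := by
  induction k with
  | zero => simpa [← chr_zero_left] using chr_mem_lowDegree (α := (0 : Word N)) (by simp)
  | succ k ih => simpa [pow_succ, Nat.succ_mul] using mul_mem_lowDegree ih hF

lemma expect_dualFinset_eq_expect {D : ℕ}
    (hD : ∀ c ∈ C, c ≠ 0 → D ≤ hammingNorm c) {k : ℕ} (hk : k < D) {P : Word N → ℝ}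
    (hP : P ∈ lowDegree N k) : 𝔼 p ∈ dualFinset (C : Set (Word N)), P p = 𝔼 p, P p := by
  induction hP using Submodule.span_induction with
  | mem _ hP =>
    obtain ⟨α, hα, rfl⟩ := hP
    rw [expect_chr_dualFinset hD (hα.trans_lt hk), expect_chr]
  | zero => simp
  | add _ _ _ _ hP hQ => simp only [Pi.add_apply, expect_add_distrib, hP, hQ]
  | smul a _ _ hP => simp only [Pi.smul_apply, smul_eq_mul, ← mul_expect, hP]

lemma exists_mem_lowDegree_eqOn_dualSet {ℓ : ℕ} {f : Word N → ℝ}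
    (hf : f ∈ Submodule.span ℝ
      {g : Word N → ℝ | ∃ α : Word N, distCode (C : Set (Word N)) α ≤ ℓ ∧ g = chr α}) :
    ∃ F ∈ lowDegree N ℓ, Set.EqOn f F (dualSet (C : Set (Word N))) := by
  let R := LinearMap.funLeft ℝ ℝ (Subtype.val : dualSet (C : Set (Word N)) → Word N)
  suffices h : Submodule.span ℝ {g : Word N → ℝ | ∃ α : Word N,
      distCode (C : Set (Word N)) α ≤ ℓ ∧ g = chr α} ≤ ((lowDegree N ℓ).map R).comap R by
    obtain ⟨F, hF, hRF⟩ := h hf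
    exact ⟨F, hF, fun p hp => (congr_fun hRF ⟨p, hp⟩).symm⟩
  refine Submodule.span_le.2 ?_
  rintro _ ⟨α, hα, rfl⟩
  -- on `C^⊥` the character `χ_α` coincides with `χ_{α + c}` for every `c ∈ C`
  obtain ⟨c, hc, hαc⟩ : ∃ c ∈ C, hammingDist α c = distCode (C : Set (Word N)) α :=
    Nat.sInf_mem (s := {d | ∃ c ∈ (C : Set (Word N)), hammingDist α c = d})
      ⟨hammingDist α 0, 0, C.zero_mem, rfl⟩
  refine ⟨chr (α + c), chr_mem_lowDegree ?_, funext fun p => ?_⟩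
  · rwa [← ZModModule.neg_eq_self α, ← hammingDist_eq_hammingNorm, hαc]
  · simp [R, chr_add_left, chr_of_sum_eq_zero (p.2 c hc)]

lemma expect_cons (h : Word (N + 1) → ℝ) :
    𝔼 q, h q = 𝔼 p, (h (Fin.cons 0 p) + h (Fin.cons 1 p)) / 2 := by
  rw [← Fintype.expect_equiv (Fin.consEquiv fun _ => ZMod 2) (fun xp => h (Fin.cons xp.1 xp.2)) h
    fun _ => rfl, ← univ_product_univ, expect_product, expect_comm]
  have hsum (g : ZMod 2 → ℝ) : ∑ x, g x = g 0 + g 1 := Fin.sum_univ_two g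
  simp [Fintype.expect_eq_sum_div_card, hsum]

lemma cons_add_cons_mem_lowDegree {ℓ : ℕ} {F : Word (N + 1) → ℝ}
    (hF : F ∈ lowDegree (N + 1) ℓ) :
    (fun p => F (Fin.cons 0 p) + F (Fin.cons 1 p)) ∈ lowDegree N ℓ := by
  let L := LinearMap.funLeft ℝ ℝ (fun p : Word N => (Fin.cons 0 p : Word (N + 1))) +
    LinearMap.funLeft ℝ ℝ (fun p : Word N => (Fin.cons 1 p : Word (N + 1)))
  refine (Submodule.span_le.2 ?_ : lowDegree (N + 1) ℓ ≤ (lowDegree N ℓ).comap L) hF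
  rintro _ ⟨α, hα, rfl⟩
  obtain ⟨a, β, rfl⟩ : ∃ a β, α = Fin.cons a β := ⟨α 0, Fin.tail α, (Fin.cons_self_tail α).symm⟩
  rw [Set.mem_ofPred_eq, hammingNorm_cons] at hα
  rw [SetLike.mem_coe, Submodule.mem_comap]
  obtain rfl | rfl := ZMod.eq_zero_or_eq_one_of_two a
  · convert Submodule.smul_mem _ (2 : ℝ) (chr_mem_lowDegree (α := β) (by simpa using hα)) using 1
    ext p
    simp [L, LinearMap.funLeft_apply, chr_cons]
    ring
  · convert Submodule.zero_mem _ using 1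
    ext p
    simp [L, LinearMap.funLeft_apply, chr_cons, ZMod.val_one]

lemma cons_sub_cons_mem_span {ℓ : ℕ} {F : Word (N + 1) → ℝ}
    (hF : F ∈ lowDegree (N + 1) ℓ) :
    (fun p => F (Fin.cons 0 p) - F (Fin.cons 1 p)) ∈
      Submodule.span ℝ (chr '' {β : Word N | hammingNorm β < ℓ}) := by
  let L := LinearMap.funLeft ℝ ℝ (fun p : Word N => (Fin.cons 0 p : Word (N + 1))) -
    LinearMap.funLeft ℝ ℝ (fun p : Word N => (Fin.cons 1 p : Word (N + 1)))
  refine (Submodule.span_le.2 ?_ : lowDegree (N + 1) ℓ ≤ (Submodule.span ℝ _).comap L) hF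
  rintro _ ⟨α, hα, rfl⟩
  obtain ⟨a, β, rfl⟩ : ∃ a β, α = Fin.cons a β := ⟨α 0, Fin.tail α, (Fin.cons_self_tail α).symm⟩
  rw [Set.mem_ofPred_eq, hammingNorm_cons] at hα
  rw [SetLike.mem_coe, Submodule.mem_comap]
  obtain rfl | rfl := ZMod.eq_zero_or_eq_one_of_two a
  · convert Submodule.zero_mem _ using 1
    ext p
    simp [L, LinearMap.funLeft_apply, chr_cons]
  · have hβ : β ∈ {β : Word N | hammingNorm β < ℓ} := by simp at hα ⊢; omega
    convert Submodule.smul_mem _ (2 : ℝ) (Submodule.subset_span (Set.mem_image_of_mem chr hβ))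
      using 1
    ext p
    simp [L, LinearMap.funLeft_apply, chr_cons, ZMod.val_one]
    ring

lemma exists_cons_decomposition {ℓ : ℕ} {F : Word (N + 1) → ℝ} (hF : F ∈ lowDegree (N + 1) ℓ) :
    ∃ G ∈ lowDegree N ℓ, ∃ H ∈ Submodule.span ℝ (chr '' {β : Word N | hammingNorm β < ℓ}),
      ∀ p, F (Fin.cons 0 p) = G p + H p ∧ F (Fin.cons 1 p) = G p - H p :=
  ⟨_, Submodule.smul_mem _ (2⁻¹ : ℝ) (cons_add_cons_mem_lowDegree hF),
    _, Submodule.smul_mem _ (2⁻¹ : ℝ) (cons_sub_cons_mem_span hF),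
    fun p => by constructor <;> simp <;> ring⟩

lemma bonami_step {g4 gh h4 a b K : ℝ} (ha : 0 ≤ a) (hb : 0 ≤ b) (hK : 0 ≤ K) (hh4 : 0 ≤ h4)
    (hg : g4 ≤ K * a ^ 2) (hh : 9 * h4 ≤ K * b ^ 2) (hcs : gh ^ 2 ≤ g4 * h4) :
    g4 + 6 * gh + h4 ≤ K * (a + b) ^ 2 := by
  have hgh : gh ≤ K * a * b / 3 := by
    refine le_of_sq_le_sq ?_ (by positivity)
    calc gh ^ 2 ≤ g4 * h4 := hcs
      _ ≤ (K * a ^ 2) * (K * b ^ 2 / 9) := mul_le_mul hg (by linarith) hh4 (by positivity)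
      _ = (K * a * b / 3) ^ 2 := by ring
  nlinarith [mul_nonneg hK (sq_nonneg b)]

theorem expect_pow_four_le_of_mem_lowDegree {ℓ : ℕ} {F : Word N → ℝ} (hF : F ∈ lowDegree N ℓ) :
    𝔼 p, F p ^ 4 ≤ 9 ^ ℓ * (𝔼 p, F p ^ 2) ^ 2 := by
  induction N generalizing ℓ with
  | zero =>
    have hF0 (p : Word 0) : F p = F 0 := congr_arg F (Subsingleton.elim p 0)
    simp only [hF0, Fintype.expect_const, ← pow_mul]
    exact le_mul_of_one_le_left (by positivity) (one_le_pow₀ (by norm_num))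
  | succ N ih =>
    obtain ⟨G, hG, H, hH, hFGH⟩ := exists_cons_decomposition hF
    have hH4 : 9 * 𝔼 p, H p ^ 4 ≤ 9 ^ ℓ * (𝔼 p, H p ^ 2) ^ 2 := by
      cases ℓ with
      | zero => simp [show H = 0 by simpa using hH]
      | succ m =>
        have hHm : H ∈ lowDegree N m := by simpa [lowDegree, Nat.lt_succ_iff] using hH
        rw [pow_succ', mul_assoc]
        exact mul_le_mul_of_nonneg_left (ih hHm) (by norm_num)
    have hF4 : 𝔼 q, F q ^ 4 = 𝔼 p, G p ^ 4 + 6 * 𝔼 p, G p ^ 2 * H p ^ 2 + 𝔼 p, H p ^ 4 := by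
      rw [expect_cons, mul_expect, ← expect_add_distrib, ← expect_add_distrib]
      exact expect_congr rfl fun p _ => by rw [(hFGH p).1, (hFGH p).2]; ring
    have hF2 : 𝔼 q, F q ^ 2 = 𝔼 p, G p ^ 2 + 𝔼 p, H p ^ 2 := by
      rw [expect_cons, ← expect_add_distrib]
      exact expect_congr rfl fun p _ => by rw [(hFGH p).1, (hFGH p).2]; ring
    have hCS := expect_mul_sq_le_sq_mul_sq univ (G · ^ 2) (H · ^ 2)
    simp only [← pow_mul] at hCS
    rw [hF4, hF2]
    exact bonami_step (expect_nonneg fun p _ => by positivity)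
      (expect_nonneg fun p _ => by positivity) (by positivity)
      (expect_nonneg fun p _ => by positivity) (ih hG) hH4 hCS

end Development

/-- Hypercontractivity over the dual of a distance-`D` code: if `ℓ < (D−1)/4` and `f`
lies in the span of the characters `χ_α` with `Δ(α,C) ≤ ℓ`, then
`E_{p∈C^⊥}[f(p)⁴] ≤ 9^ℓ (E_{p∈C^⊥}[f(p)²])²` (i.e. `‖𝒱‖_{2→4} ≤ 3^{ℓ/2}`). -/
theorem stmt8 {N : ℕ} (C : Submodule (ZMod 2) (Word N)) (D : ℕ)
    (hD : ∀ c ∈ C, c ≠ 0 → D ≤ hammingNorm c)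
    (ℓ : ℕ) (hℓ : (ℓ : ℝ) < ((D : ℝ) - 1) / 4)
    (f : Word N → ℝ)
    (hf : f ∈ Submodule.span ℝ
      {g : Word N → ℝ | ∃ α : Word N, distCode (C : Set (Word N)) α ≤ ℓ ∧ g = chr α}) :
    (∑ p ∈ dualFinset (C : Set (Word N)), f p ^ 4) /
        ((dualFinset (C : Set (Word N))).card : ℝ)
      ≤ (9 : ℝ) ^ ℓ *
        ((∑ p ∈ dualFinset (C : Set (Word N)), f p ^ 2) /
            ((dualFinset (C : Set (Word N))).card : ℝ)) ^ 2 := by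
  have h4ℓ : 4 * ℓ < D := by
    have : ((4 * ℓ : ℕ) : ℝ) < D := by push_cast; linarith
    exact_mod_cast this
  obtain ⟨F, hF, hfF⟩ := exists_mem_lowDegree_eqOn_dualSet hf
  have hmoment (k : ℕ) (hk : k * ℓ < D) :
      (∑ p ∈ dualFinset (C : Set (Word N)), f p ^ k) / #(dualFinset (C : Set (Word N)))
        = 𝔼 p, F p ^ k := by
    rw [← expect_eq_sum_div_card]
    refine (expect_congr rfl fun p hp => ?_).trans
      (expect_dualFinset_eq_expect hD hk (pow_mem_lowDegree hF k))
    rw [hfF (mem_dualFinset.1 hp)]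
  rw [hmoment 4 h4ℓ, hmoment 2 (by omega)]
  exact expect_pow_four_le_of_mem_lowDegree hF
end

section
/- Let μ_α ∈ [−1,1] satisfy μ_α = 1 − kτ + θ k²τ² for some |θ| ≤ 1, where k ≥ 1, τ > 0, kτ ≤ 1. Let t = ε/τ and λ_α = e^{−t(1−μ_α)}, ρ = e^{−ε}. Then for every δ < δ₀ (an absolute constant), if k < δ²/τ then |λ_α − ρ^k| ≤ δ. -/
/-!
Write `u = εk`. By the second-order expansion of `μα` the exponent of `λα` is `-u + x` with `x = εθk²τ`, and
`kτ < δ²` gives `|x| ≤ δ²u`. Hence `|λα - ρ^k| = e^{-u}|e^x - 1| ≤ δ² · u e^{-(1-δ²)u}`, and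
`y e^{-y} ≤ e^{-1}` bounds this by `δ² e^{-1} / (1 - δ²)`, which is at most `δ` once `δ < 1/2`.
-/

open Real

lemma Real.abs_exp_sub_one_le_abs_mul_exp_abs (x : ℝ) : |exp x - 1| ≤ |x| * exp |x| := by
  rcases le_or_gt 0 x with hx | hx
  · have h : (1 - x) * exp x ≤ 1 :=
      calc (1 - x) * exp x ≤ exp (-x) * exp x := by gcongr; linarith [add_one_le_exp (-x)]
        _ = 1 := by rw [← exp_add, neg_add_cancel, exp_zero]
    rw [abs_of_nonneg hx, abs_of_nonneg (by linarith [one_le_exp hx])]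
    linarith
  · rw [abs_of_neg hx, abs_of_nonpos (by linarith [exp_lt_one_iff.mpr hx])]
    nlinarith [add_one_le_exp x, one_le_exp (neg_pos.mpr hx).le]

lemma Real.abs_exp_neg_add_sub_exp_neg_le {u x a : ℝ} (hu : 0 ≤ u) (ha₀ : 0 ≤ a) (ha : a < 1)
    (hx : |x| ≤ a * u) : |exp (-u + x) - exp (-u)| ≤ a / (1 - a) * exp (-1) := by
  have hb : 0 < 1 - a := sub_pos.mpr ha
  calc |exp (-u + x) - exp (-u)| = exp (-u) * |exp x - 1| := by
        rw [exp_add, ← mul_sub_one, abs_mul, abs_of_pos (exp_pos _)]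
    _ ≤ exp (-u) * (a * u * exp (a * u)) := by
        gcongr
        exact (abs_exp_sub_one_le_abs_mul_exp_abs x).trans (by gcongr)
    _ = a / (1 - a) * ((1 - a) * u * exp (-((1 - a) * u))) := by
        rw [show -((1 - a) * u) = -u + a * u by ring, exp_add]
        field_simp
    _ ≤ a / (1 - a) * exp (-1) := by
        gcongr
        exact mul_exp_neg_le_exp_neg_one _

/-- Spectrum of the continuous-time walk matches the noisy cube: there is an absolute
constant `δ₀ > 0` such that whenever `μα = 1 − kτ + θ k² τ²` with `|θ| ≤ 1`, `k ≥ 1`,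
`0 < τ`, `kτ ≤ 1`, `μα ∈ [−1,1]`, and `k < δ²/τ` with `0 < δ < δ₀`, the eigenvalue
`λα = e^{−t(1−μα)}` of the continuous-time walk with `t = ε/τ` satisfies
`|λα − ρ^k| ≤ δ` where `ρ = e^{−ε}`. -/
theorem stmt15 :
    ∃ δ₀ : ℝ, 0 < δ₀ ∧
      ∀ (δ ε τ θ μα : ℝ) (k : ℕ),
        0 < δ → δ < δ₀ → 0 < ε → 0 < τ → 1 ≤ k → (k : ℝ) * τ ≤ 1 →
        |θ| ≤ 1 → -1 ≤ μα → μα ≤ 1 →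
        μα = 1 - (k : ℝ) * τ + θ * (k : ℝ) ^ 2 * τ ^ 2 →
        (k : ℝ) < δ ^ 2 / τ →
        |Real.exp (-(ε / τ) * (1 - μα)) - Real.exp (-ε) ^ k| ≤ δ := by
  refine ⟨1 / 2, by norm_num, fun δ ε τ θ μα k hδ hδ₀ hε hτ _ _ hθ _ _ hμ hk => ?_⟩
  have hkτ : (k : ℝ) * τ < δ ^ 2 := (lt_div_iff₀ hτ).mp hk
  have hexponent : -(ε / τ) * (1 - μα) = -(ε * k) + ε * θ * k ^ 2 * τ := by
    rw [hμ]; field_simp; ring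
  have hpow : exp (-ε) ^ k = exp (-(ε * k)) := by
    rw [← exp_nat_mul]; ring_nf
  have hx : |ε * θ * k ^ 2 * τ| ≤ δ ^ 2 * (ε * k) := by
    rw [show ε * θ * k ^ 2 * τ = θ * (ε * k) * (k * τ) by ring, abs_mul, abs_mul,
      abs_of_nonneg (by positivity : 0 ≤ ε * k), abs_of_nonneg (by positivity : (0 : ℝ) ≤ k * τ)]
    calc |θ| * (ε * k) * (k * τ) ≤ 1 * (ε * k) * δ ^ 2 := by gcongr
      _ = δ ^ 2 * (ε * k) := by ring
  rw [hexponent, hpow]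
  refine (abs_exp_neg_add_sub_exp_neg_le (by positivity) (sq_nonneg δ) (by nlinarith) hx).trans ?_
  have hquot : δ ^ 2 / (1 - δ ^ 2) ≤ 2 * δ := by
    rw [div_le_iff₀ (by nlinarith)]; nlinarith
  nlinarith [exp_neg_one_lt_half, exp_pos (-1)]
end

section
/- Let S ⊆ GF(2)^n with 0 ∈ S and |S+S| < 1.2·|S|, where S+S = {a+b : a,b ∈ S}. Then S+S is a linear subspace of GF(2)^n. -/
open scoped Pointwise
open Finset

/-!
Over `GF(2)` we have `-S + S = S + S`, and `1.2 < 3 / 2`, so the theorem is a special case of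
Tao's result that `S⁻¹ * S` is a subgroup whenever the finite set `S` of a group has doubling
less than `3 / 2` (`Finset.invMulSubgroup`), read in additive notation through `Multiplicative`.
-/

namespace Finset

theorem exists_addSubgroup_coe_eq_neg_add_of_doubling_lt_three_halves {G : Type*} [AddGroup G]
    [DecidableEq G] (S : Finset G) (h : #(S + S) < (3 / 2 : ℚ) * #S) :
    ∃ H : AddSubgroup G, (H : Set G) = ↑(-S + S) := by
  set A : Finset (Multiplicative G) := S.map Multiplicative.ofAdd.toEmbedding
  have hAA : A * A = (S + S).map Multiplicative.ofAdd.toEmbedding := by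
    ext x
    simp [A, mem_mul, mem_add, ← ofAdd_add, ← Equiv.eq_symm_apply]
  have hA : #(A * A) < (3 / 2 : ℚ) * #A := by simpa [hAA, A] using h
  refine ⟨Subgroup.toAddSubgroup' (invMulSubgroup A hA), ?_⟩
  ext x
  rw [SetLike.mem_coe, Subgroup.mem_toAddSubgroup', ← SetLike.mem_coe, invMulSubgroup_eq_inv_mul]
  simp [A, Set.mem_mul, Set.mem_add, ← ofAdd_add]

theorem neg_eq_self_of_module_zmod_two {G : Type*} [AddCommGroup G] [Module (ZMod 2) G]
    [DecidableEq G] (S : Finset G) : -S = S := by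
  ext x
  simp [ZModModule.neg_eq_self]

end Finset

theorem stmt19_general {n : ℕ} (S : Finset (Fin n → ZMod 2))
    (hcard : ((S + S).card : ℝ) < 1.2 * (S.card : ℝ)) :
    ∃ V : Submodule (ZMod 2) (Fin n → ZMod 2),
      (↑(S + S) : Set (Fin n → ZMod 2)) = (V : Set (Fin n → ZMod 2)) := by
  have hdoubling : #(S + S) < (3 / 2 : ℚ) * #S := by
    rw [← Rat.cast_lt (K := ℝ)]
    push_cast
    linarith [(Nat.cast_nonneg #S : (0 : ℝ) ≤ #S)]
  obtain ⟨H, hH⟩ := S.exists_addSubgroup_coe_eq_neg_add_of_doubling_lt_three_halves hdoubling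
  refine ⟨AddSubgroup.toZModSubmodule 2 H, ?_⟩
  rw [AddSubgroup.coe_toZModSubmodule, hH, Finset.neg_eq_self_of_module_zmod_two]

/-- If `S ⊆ GF(2)^n` contains `0` and `|S+S| < 1.2 |S|`, then the sumset `S+S` is a
linear subspace of `GF(2)^n`. -/
theorem stmt19 {n : ℕ} (S : Finset (Fin n → ZMod 2))
    (h0 : (0 : Fin n → ZMod 2) ∈ S)
    (hcard : ((S + S).card : ℝ) < 1.2 * (S.card : ℝ)) :
    ∃ V : Submodule (ZMod 2) (Fin n → ZMod 2),
      (↑(S + S) : Set (Fin n → ZMod 2)) = (V : Set (Fin n → ZMod 2)) :=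
  stmt19_general S hcard
end
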